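/- Let (X,μ) be a measure space and J,Q ⊆ (0,∞) with m_J = inf J > 0, M_J = sup J < ∞ and m_Q = inf Q > 0. Then IL_{J,Q}(X,μ) = L_{m_J,m_Q}(X,μ) ∩ L_{M_J,m_Q}(X,μ), and for every f ∈ IL_{J,Q}(X,μ), max{‖f‖_{L_{m_J,m_Q}}, ‖f‖_{L_{M_J,m_Q}}} ≤ sup_{p∈J,q∈Q} ‖f‖_{L_{p,q}} ≤ K · max{‖f‖_{L_{m_J,m_Q}}, ‖f‖_{L_{M_J,m_Q}}}, where K = 2^{1/m_Q} · max{1, (m_Q/m_J)^{1/m_Q}}. -/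

import Mathlib

/-!
Write `u(t) = t^{1/p} f*(t)`. Since `f*` is antitone, `∫₀ᵗ s^{q/p-1} ds = (p/q) t^{q/p}` gives the
weak estimate `u(t) ≤ (q/p)^{1/q} ‖f‖_{p,q}`; splitting `u^q = u^{q-q₀} u^{q₀}` then yields
`‖f‖_{p,q} ≤ (q₀/p)^{1/q₀-1/q} ‖f‖_{p,q₀}` for `q₀ ≤ q`. For `p₀ ≤ p ≤ p₁` one has
`t^{1/p} ≤ max (t^{1/p₀}) (t^{1/p₁})` (compare with `t = 1`), hence
`‖f‖_{p,q}^q ≤ ‖f‖_{p₀,q}^q + ‖f‖_{p₁,q}^q`. These two estimates give the upper bound. For the lower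
bound, Fatou's lemma makes `(p, q) ↦ ‖f‖_{p,q}` lower semicontinuous on `(0,∞)²`, and
`(m_J, m_Q)`, `(M_J, m_Q)` lie in the closure of `J × Q`.
-/

open MeasureTheory Set ENNReal

noncomputable section

variable {X : Type*} [MeasurableSpace X]

/-- The distribution function `d_f(α) = μ {x : |f x| > α}`. -/
def distFun (μ : Measure X) (f : X → ℝ) (α : ℝ) : ℝ≥0∞ :=
  μ {x | α < |f x|}

/-- The decreasing rearrangement `f*(t) = inf {s > 0 : d_f(s) ≤ t}`, with `inf ∅ = ∞`. -/
def rearr (μ : Measure X) (f : X → ℝ) (t : ℝ) : ℝ≥0∞ :=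
  ⨅ (s : ℝ) (_ : 0 < s ∧ distFun μ f s ≤ ENNReal.ofReal t), ENNReal.ofReal s

/-- The Lorentz quasi-norm `‖f‖_{L_{p,q}}` (for `q = ∞` the weak norm `sup_t t^{1/p} f*(t)`). -/
def lorentzNorm (μ : Measure X) (f : X → ℝ) (p q : ℝ≥0∞) : ℝ≥0∞ :=
  if q = ∞ then ⨆ t ∈ Ioi (0 : ℝ), ENNReal.ofReal t ^ (1 / p).toReal * rearr μ f t
  else (∫⁻ t in Ioi (0 : ℝ),
      (ENNReal.ofReal t ^ (1 / p).toReal * rearr μ f t) ^ q.toReal / ENNReal.ofReal t) ^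
      (1 / q.toReal)

/-- The Lorentz space `L_{p,q}(X, μ)`, as the set of measurable functions with
finite Lorentz quasi-norm. -/
def Lorentz (μ : Measure X) (p q : ℝ≥0∞) : Set (X → ℝ) :=
  {f | Measurable f ∧ lorentzNorm μ f p q < ∞}

/-- `IL_{J,Q}(X,μ)`: functions in every `L_{p,q}`, `p ∈ J`, `q ∈ Q`, with uniformly
bounded norms. -/
def ILJQ (μ : Measure X) (J Q : Set ℝ≥0∞) : Set (X → ℝ) :=
  {f | (∀ p ∈ J, ∀ q ∈ Q, f ∈ Lorentz μ p q) ∧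
    (⨆ p ∈ J, ⨆ q ∈ Q, lorentzNorm μ f p q) < ∞}

open Filter Topology

lemma ENNReal.rpow_le_max_rpow (x : ℝ≥0∞) {a b c : ℝ} (hab : a ≤ b) (hbc : b ≤ c) :
    x ^ b ≤ max (x ^ a) (x ^ c) := by
  rcases le_total x 1 with hx | hx
  · exact le_max_of_le_left (rpow_le_rpow_of_exponent_ge hx hab)
  · exact le_max_of_le_right (rpow_le_rpow_of_exponent_le hx hbc)

lemma ENNReal.tendsto_const_rpow {α : Type*} {l : Filter α} {x : ℝ≥0∞} {e : α → ℝ} {e₀ : ℝ}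
    (he : Tendsto e l (𝓝 e₀)) (hx : x ≠ 0 ∧ x ≠ ∞ ∨ 0 < e₀) :
    Tendsto (fun a => x ^ e a) l (𝓝 (x ^ e₀)) := by
  by_cases hx' : x ≠ 0 ∧ x ≠ ∞
  · have hxr : 0 < x.toReal := toReal_pos hx'.1 hx'.2
    have hofReal : ∀ y : ℝ, x ^ y = ENNReal.ofReal (x.toReal ^ y) := fun y => by
      rw [← ofReal_rpow_of_pos hxr, ofReal_toReal hx'.2]
    simp only [hofReal]
    exact ENNReal.tendsto_ofReal (((Real.continuous_const_rpow hxr.ne').tendsto e₀).comp he)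
  · have he₀ : 0 < e₀ := hx.resolve_left hx'
    have hfix : ∀ y : ℝ, 0 < y → x ^ y = x := fun y hy => by
      rcases not_and_or.1 hx' with h | h <;> rw [not_ne_iff] at h <;> subst h
      · exact zero_rpow_of_pos hy
      · exact top_rpow_of_pos hy
    rw [hfix e₀ he₀]
    refine tendsto_const_nhds.congr' ?_
    filter_upwards [he.eventually (eventually_gt_nhds he₀)] with a ha
    exact (hfix _ ha).symm

lemma lintegral_Ioo_ofReal_rpow_sub_one {c : ℝ} (hc : 0 < c) {t : ℝ} (ht : 0 < t) :
    ∫⁻ s in Ioo (0 : ℝ) t, ENNReal.ofReal s ^ (c - 1) = ENNReal.ofReal (t ^ c / c) := by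
  have hint : IntegrableOn (fun s : ℝ => s ^ (c - 1)) (Ioo 0 t) := by
    rw [← intervalIntegrable_iff_integrableOn_Ioo_of_le ht.le]
    exact intervalIntegral.intervalIntegrable_rpow' (by linarith)
  rw [setLIntegral_congr_fun measurableSet_Ioo fun s hs => ofReal_rpow_of_pos hs.1,
    ← ofReal_integral_eq_lintegral_ofReal hint
      ((ae_restrict_iff' measurableSet_Ioo).2 (ae_of_all _ fun s hs => Real.rpow_nonneg hs.1.le _)),
    ← integral_Ioc_eq_integral_Ioo, ← intervalIntegral.integral_of_le ht.le,
    integral_rpow (Or.inl (by linarith)), sub_add_cancel, Real.zero_rpow hc.ne', sub_zero]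

section Lorentz

variable {μ : Measure X} {f : X → ℝ}

lemma rearr_antitone : Antitone (rearr μ f) := fun _ _ hst =>
  le_iInf₂ fun s hs => iInf₂_le s ⟨hs.1, hs.2.trans (ofReal_le_ofReal hst)⟩

@[fun_prop]
lemma measurable_rearr : Measurable (rearr μ f) :=
  rearr_antitone.measurable

lemma lorentzNorm_rpow_toReal {p q : ℝ≥0∞} (hq₀ : q ≠ 0) (hq : q ≠ ∞) :
    lorentzNorm μ f p q ^ q.toReal = ∫⁻ t in Ioi (0 : ℝ),
      (ENNReal.ofReal t ^ (1 / p).toReal * rearr μ f t) ^ q.toReal / ENNReal.ofReal t := by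
  rw [lorentzNorm, if_neg hq, ← rpow_mul, one_div_mul_cancel (toReal_pos hq₀ hq).ne', rpow_one]

lemma lorentzNorm_rpow_toReal_eq_lintegral (p : ℝ≥0∞) {q : ℝ≥0∞} (hq₀ : q ≠ 0) (hq : q ≠ ∞) :
    lorentzNorm μ f p q ^ q.toReal = ∫⁻ t in Ioi (0 : ℝ),
      ENNReal.ofReal t ^ (q.toReal / p.toReal - 1) * rearr μ f t ^ q.toReal := by
  rw [lorentzNorm_rpow_toReal hq₀ hq]
  refine setLIntegral_congr_fun measurableSet_Ioi fun t ht => ?_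
  have ht₀ : ENNReal.ofReal t ≠ 0 := by simpa using ht
  rw [toReal_div, toReal_one, mul_rpow_of_nonneg _ _ toReal_nonneg, ← rpow_mul, sub_eq_add_neg,
    rpow_add _ _ ht₀ ofReal_ne_top, rpow_neg_one, div_eq_mul_inv, one_div_mul_eq_div]
  ring

lemma ofReal_rpow_mul_rearr_le {p q : ℝ≥0∞} (hp₀ : p ≠ 0) (hp : p ≠ ∞) (hq₀ : q ≠ 0)
    (hq : q ≠ ∞) {t : ℝ} (ht : 0 < t) :
    ENNReal.ofReal t ^ (1 / p).toReal * rearr μ f t ≤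
      (q / p) ^ (1 / q.toReal) * lorentzNorm μ f p q := by
  set r := q.toReal
  set c := q.toReal / p.toReal
  have hr : 0 < r := toReal_pos hq₀ hq
  have hc : 0 < c := div_pos hr (toReal_pos hp₀ hp)
  have hqp : q / p = ENNReal.ofReal c := by
    rw [show c = (q / p).toReal from (toReal_div q p).symm, ofReal_toReal (div_ne_top hq hp₀)]
  have hint : rearr μ f t ^ r * ENNReal.ofReal (t ^ c / c) ≤ lorentzNorm μ f p q ^ r := by
    rw [lorentzNorm_rpow_toReal_eq_lintegral p hq₀ hq, ← lintegral_Ioo_ofReal_rpow_sub_one hc ht,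
      ← lintegral_const_mul _ (measurable_ofReal.pow_const _)]
    calc ∫⁻ s in Ioo 0 t, rearr μ f t ^ r * ENNReal.ofReal s ^ (c - 1)
        ≤ ∫⁻ s in Ioo 0 t, ENNReal.ofReal s ^ (c - 1) * rearr μ f s ^ r :=
          setLIntegral_mono' measurableSet_Ioo fun s hs => by
            rw [mul_comm]; gcongr; exact rearr_antitone hs.2.le
      _ ≤ _ := lintegral_mono_set Ioo_subset_Ioi_self
  rw [ENNReal.ofReal_div_of_pos hc, ← ofReal_rpow_of_pos ht, ← hqp, ← mul_div_assoc,
    ENNReal.div_le_iff (by simp [hp, hq₀]) (div_ne_top hq hp₀)] at hint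
  rw [← rpow_le_rpow_iff hr, mul_rpow_of_nonneg _ _ hr.le, mul_rpow_of_nonneg _ _ hr.le,
    ← rpow_mul, ← rpow_mul, one_div_mul_cancel hr.ne', rpow_one, toReal_div, toReal_one,
    one_div_mul_eq_div, mul_comm (q / p)]
  exact (mul_comm _ _).trans_le hint

lemma lorentzNorm_le_mul_lorentzNorm_of_le {p q₀ q : ℝ≥0∞} (hp₀ : p ≠ 0) (hp : p ≠ ∞)
    (hq₀ : q₀ ≠ 0) (hq₀q : q₀ ≤ q) (hq : q ≠ ∞) :
    lorentzNorm μ f p q ≤ (q₀ / p) ^ (1 / q₀.toReal - 1 / q.toReal) * lorentzNorm μ f p q₀ := by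
  have hq₀' : q₀ ≠ ∞ := ne_top_of_le_ne_top hq hq₀q
  set r₀ := q₀.toReal
  set r := q.toReal
  set C := q₀ / p
  set N₀ := lorentzNorm μ f p q₀
  have hr₀ : 0 < r₀ := toReal_pos hq₀ hq₀'
  have hr₀r : r₀ ≤ r := toReal_mono hq hq₀q
  have hr : 0 < r := hr₀.trans_le hr₀r
  have hq0 : q ≠ 0 := (hq₀.bot_lt.trans_le hq₀q).ne'
  have hpow : lorentzNorm μ f p q ^ r ≤ (C ^ (1 / r₀) * N₀) ^ (r - r₀) * N₀ ^ r₀ := by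
    rw [lorentzNorm_rpow_toReal hq0 hq, lorentzNorm_rpow_toReal hq₀ hq₀',
      ← lintegral_const_mul _ (by fun_prop)]
    refine setLIntegral_mono' measurableSet_Ioi fun t ht => ?_
    rw [← mul_div_assoc]
    gcongr ?_ / _
    rw [← sub_add_cancel q.toReal q₀.toReal, rpow_add_of_nonneg _ _ (sub_nonneg.2 hr₀r) hr₀.le]
    exact mul_le_mul_left
      (rpow_le_rpow (ofReal_rpow_mul_rearr_le hp₀ hp hq₀ hq₀' ht) (sub_nonneg.2 hr₀r)) _
  rw [← rpow_le_rpow_iff hr]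
  convert hpow using 1
  rw [mul_rpow_of_nonneg _ _ hr.le, mul_rpow_of_nonneg _ _ (sub_nonneg.2 hr₀r), ← rpow_mul,
    ← rpow_mul, mul_assoc, ← rpow_add_of_nonneg _ _ (sub_nonneg.2 hr₀r) hr₀.le, sub_add_cancel]
  congr 2
  field_simp

lemma lorentzNorm_rpow_le_add {p₀ p p₁ q : ℝ≥0∞} (hp₀ : p₀ ≠ 0) (h₀ : p₀ ≤ p) (h₁ : p ≤ p₁)
    (hq₀ : q ≠ 0) (hq : q ≠ ∞) :
    lorentzNorm μ f p q ^ q.toReal ≤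
      lorentzNorm μ f p₀ q ^ q.toReal + lorentzNorm μ f p₁ q ^ q.toReal := by
  have ha₀ : (1 / p).toReal ≤ (1 / p₀).toReal :=
    toReal_mono (by simpa using hp₀) (ENNReal.div_le_div_left h₀ 1)
  have ha₁ : (1 / p₁).toReal ≤ (1 / p).toReal :=
    toReal_mono (by simpa using (hp₀.bot_lt.trans_le h₀).ne') (ENNReal.div_le_div_left h₁ 1)
  rw [lorentzNorm_rpow_toReal hq₀ hq, lorentzNorm_rpow_toReal hq₀ hq,
    lorentzNorm_rpow_toReal hq₀ hq, ← lintegral_add_left (by fun_prop)]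
  refine setLIntegral_mono' measurableSet_Ioi fun t _ => ?_
  rcases le_max_iff.1 ((ENNReal.ofReal t).rpow_le_max_rpow ha₁ ha₀) with h | h
  · exact le_add_left (by gcongr)
  · exact le_add_right (by gcongr)

lemma lorentzNorm_le_two_rpow_mul_max {p₀ p p₁ q : ℝ≥0∞} (hp₀ : p₀ ≠ 0) (h₀ : p₀ ≤ p)
    (h₁ : p ≤ p₁) (hq₀ : q ≠ 0) (hq : q ≠ ∞) :
    lorentzNorm μ f p q ≤
      2 ^ (1 / q.toReal) * max (lorentzNorm μ f p₀ q) (lorentzNorm μ f p₁ q) := by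
  have hr : 0 < q.toReal := toReal_pos hq₀ hq
  rw [← rpow_le_rpow_iff hr, mul_rpow_of_nonneg _ _ hr.le, ← rpow_mul, one_div_mul_cancel hr.ne',
    rpow_one, two_mul]
  refine (lorentzNorm_rpow_le_add hp₀ h₀ h₁ hq₀ hq).trans (add_le_add ?_ ?_) <;> gcongr
  exacts [le_max_left _ _, le_max_right _ _]

lemma lorentzNorm_le_mul_max {p₀ p p₁ q₀ q : ℝ≥0∞} (hp₀ : p₀ ≠ 0) (h₀ : p₀ ≤ p) (h₁ : p ≤ p₁)
    (hp₁ : p₁ ≠ ∞) (hq₀ : q₀ ≠ 0) (hq₀q : q₀ ≤ q) (hq : q ≠ ∞) :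
    lorentzNorm μ f p q ≤ (2 ^ (1 / q₀).toReal * max 1 ((q₀ / p₀) ^ (1 / q₀).toReal)) *
      max (lorentzNorm μ f p₀ q₀) (lorentzNorm μ f p₁ q₀) := by
  have hq₀' : q₀ ≠ ∞ := ne_top_of_le_ne_top hq hq₀q
  have hr₀ : 0 < q₀.toReal := toReal_pos hq₀ hq₀'
  have hr : 0 < q.toReal := hr₀.trans_le (toReal_mono hq hq₀q)
  have hexp : (1 / q₀).toReal = 1 / q₀.toReal := by rw [toReal_div, toReal_one]
  have hd : 0 ≤ 1 / q₀.toReal - 1 / q.toReal :=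
    sub_nonneg.2 (one_div_le_one_div_of_le hr₀ (toReal_mono hq hq₀q))
  have hconst :
      (q₀ / p) ^ (1 / q₀.toReal - 1 / q.toReal) ≤ max 1 ((q₀ / p₀) ^ (1 / q₀).toReal) := by
    rcases le_total (q₀ / p) 1 with hC | hC
    · exact le_max_of_le_left (rpow_le_one hC hd)
    · refine le_max_of_le_right ?_
      calc (q₀ / p) ^ (1 / q₀.toReal - 1 / q.toReal)
          ≤ (q₀ / p) ^ (1 / q₀.toReal) :=
            rpow_le_rpow_of_exponent_le hC (sub_le_self _ (by positivity))
        _ ≤ (q₀ / p₀) ^ (1 / q₀).toReal := by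
            rw [hexp]; gcongr
  have hp : p ≠ ∞ := ne_top_of_le_ne_top hp₁ h₁
  calc lorentzNorm μ f p q
      ≤ (q₀ / p) ^ (1 / q₀.toReal - 1 / q.toReal) * lorentzNorm μ f p q₀ :=
        lorentzNorm_le_mul_lorentzNorm_of_le (hp₀.bot_lt.trans_le h₀).ne' hp hq₀ hq₀q hq
    _ ≤ max 1 ((q₀ / p₀) ^ (1 / q₀).toReal) *
          (2 ^ (1 / q₀.toReal) * max (lorentzNorm μ f p₀ q₀) (lorentzNorm μ f p₁ q₀)) :=
        mul_le_mul' hconst (lorentzNorm_le_two_rpow_mul_max hp₀ h₀ h₁ hq₀ hq₀')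
    _ = _ := by rw [hexp]; ring

lemma lorentzNorm_le_of_tendsto {p q : ℕ → ℝ≥0∞} {p₀ q₀ S : ℝ≥0∞}
    (hq : ∀ n, q n ∈ Ioo 0 ∞) (hp₀ : p₀ ∈ Ioo 0 ∞)
    (hq₀ : q₀ ∈ Ioo 0 ∞) (hp_lim : Tendsto p atTop (𝓝 p₀)) (hq_lim : Tendsto q atTop (𝓝 q₀))
    (hS : ∀ n, lorentzNorm μ f (p n) (q n) ≤ S) :
    lorentzNorm μ f p₀ q₀ ≤ S := by
  have hr₀ : 0 < q₀.toReal := toReal_pos hq₀.1.ne' hq₀.2.ne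
  have hr_lim : Tendsto (fun n => (q n).toReal) atTop (𝓝 q₀.toReal) :=
    (tendsto_toReal hq₀.2.ne).comp hq_lim
  have hb_lim : Tendsto (fun n => (q n).toReal / (p n).toReal - 1) atTop
      (𝓝 (q₀.toReal / p₀.toReal - 1)) :=
    (hr_lim.div ((tendsto_toReal hp₀.2.ne).comp hp_lim)
      (toReal_pos hp₀.1.ne' hp₀.2.ne).ne').sub_const 1
  have hconv : ∀ t ∈ Ioi (0 : ℝ), Tendsto
      (fun n => ENNReal.ofReal t ^ ((q n).toReal / (p n).toReal - 1) * rearr μ f t ^ (q n).toReal)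
      atTop (𝓝 (ENNReal.ofReal t ^ (q₀.toReal / p₀.toReal - 1) * rearr μ f t ^ q₀.toReal)) := by
    intro t ht
    have ht₀ : ENNReal.ofReal t ≠ 0 := by simpa using ht
    exact ENNReal.Tendsto.mul (tendsto_const_rpow hb_lim (.inl ⟨ht₀, ofReal_ne_top⟩))
      (.inl (by simp [ht₀])) (tendsto_const_rpow hr_lim (.inr hr₀)) (.inr (by simp [ht₀]))
  rw [← rpow_le_rpow_iff hr₀]
  calc lorentzNorm μ f p₀ q₀ ^ q₀.toReal
      = ∫⁻ t in Ioi (0 : ℝ), liminf (fun n => ENNReal.ofReal t ^ ((q n).toReal / (p n).toReal - 1) *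
          rearr μ f t ^ (q n).toReal) atTop := by
        rw [lorentzNorm_rpow_toReal_eq_lintegral p₀ hq₀.1.ne' hq₀.2.ne]
        exact setLIntegral_congr_fun measurableSet_Ioi fun t ht => (hconv t ht).liminf_eq.symm
    _ ≤ liminf (fun n => lorentzNorm μ f (p n) (q n) ^ (q n).toReal) atTop := by
        simp_rw [fun n => lorentzNorm_rpow_toReal_eq_lintegral (μ := μ) (f := f) (p n)
          (hq n).1.ne' (hq n).2.ne]
        exact lintegral_liminf_le fun n => by fun_prop
    _ ≤ liminf (fun n => S ^ (q n).toReal) atTop :=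
        liminf_le_liminf (.of_forall fun n => rpow_le_rpow (hS n) toReal_nonneg)
    _ = S ^ q₀.toReal := (tendsto_const_rpow hr_lim (.inr hr₀)).liminf_eq

lemma lorentzNorm_le_iSup_of_mem_closure {J Q : Set ℝ≥0∞} (hQ : Q ⊆ Ioo 0 ∞) {p q : ℝ≥0∞}
    (hpJ : p ∈ closure J) (hqQ : q ∈ closure Q)
    (hp : p ∈ Ioo 0 ∞) (hq : q ∈ Ioo 0 ∞) :
    lorentzNorm μ f p q ≤ ⨆ p ∈ J, ⨆ q ∈ Q, lorentzNorm μ f p q := by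
  obtain ⟨u, huJ, hu⟩ := mem_closure_iff_seq_limit.1 hpJ
  obtain ⟨v, hvQ, hv⟩ := mem_closure_iff_seq_limit.1 hqQ
  exact lorentzNorm_le_of_tendsto (fun n => hQ (hvQ n)) hp hq hu hv
    fun n => le_iSup₂_of_le (u n) (huJ n) (le_iSup₂_of_le (v n) (hvQ n) le_rfl)

end Lorentz

theorem stmt13_general (μ : Measure X) (J Q : Set ℝ≥0∞)
    (hJne : J.Nonempty) (hmJ : 0 < sInf J) (hMJ : sSup J ≠ ∞)
    (hQne : Q.Nonempty) (hQ : Q ⊆ Ioo 0 ∞) (hmQ : 0 < sInf Q) :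
    ILJQ μ J Q = Lorentz μ (sInf J) (sInf Q) ∩ Lorentz μ (sSup J) (sInf Q) ∧
    ∀ f ∈ ILJQ μ J Q,
      max (lorentzNorm μ f (sInf J) (sInf Q)) (lorentzNorm μ f (sSup J) (sInf Q)) ≤
        (⨆ p ∈ J, ⨆ q ∈ Q, lorentzNorm μ f p q) ∧
      (⨆ p ∈ J, ⨆ q ∈ Q, lorentzNorm μ f p q) ≤
        ((2 : ℝ≥0∞) ^ (1 / sInf Q).toReal *
            max 1 ((sInf Q / sInf J) ^ (1 / sInf Q).toReal)) *
          max (lorentzNorm μ f (sInf J) (sInf Q)) (lorentzNorm μ f (sSup J) (sInf Q)) := by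
  obtain ⟨q, hq⟩ := hQne
  have hmQ' : sInf Q ∈ Ioo 0 ∞ := ⟨hmQ, (sInf_le hq).trans_lt (hQ hq).2⟩
  have hmJ' : sInf J ∈ Ioo 0 ∞ := ⟨hmJ, (sInf_le_sSup hJne).trans_lt hMJ.lt_top⟩
  have hMJ' : sSup J ∈ Ioo 0 ∞ := ⟨hmJ.trans_le (sInf_le_sSup hJne), hMJ.lt_top⟩
  have hmQ_cl : sInf Q ∈ closure Q := sInf_mem_closure ⟨q, hq⟩
  set K : ℝ≥0∞ := 2 ^ (1 / sInf Q).toReal * max 1 ((sInf Q / sInf J) ^ (1 / sInf Q).toReal)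
  have hK : K ≠ ∞ := mul_ne_top (rpow_ne_top_of_nonneg toReal_nonneg ofNat_ne_top)
    (max_ne_top one_ne_top (rpow_ne_top_of_nonneg toReal_nonneg (div_ne_top hmQ'.2.ne hmJ.ne')))
  have hlower : ∀ f, max (lorentzNorm μ f (sInf J) (sInf Q)) (lorentzNorm μ f (sSup J) (sInf Q)) ≤
      ⨆ p ∈ J, ⨆ q ∈ Q, lorentzNorm μ f p q := fun f => max_le
    (lorentzNorm_le_iSup_of_mem_closure hQ (sInf_mem_closure hJne) hmQ_cl hmJ' hmQ')
    (lorentzNorm_le_iSup_of_mem_closure hQ (sSup_mem_closure hJne) hmQ_cl hMJ' hmQ')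
  have hupper : ∀ f, (⨆ p ∈ J, ⨆ q ∈ Q, lorentzNorm μ f p q) ≤
      K * max (lorentzNorm μ f (sInf J) (sInf Q)) (lorentzNorm μ f (sSup J) (sInf Q)) :=
    fun f => iSup₂_le fun p hp => iSup₂_le fun q hq => lorentzNorm_le_mul_max hmJ.ne' (sInf_le hp)
      (le_sSup hp) hMJ hmQ.ne' (sInf_le hq) (hQ hq).2.ne
  refine ⟨Set.ext fun f => ⟨fun ⟨hmem, hsup⟩ => ?_, fun ⟨⟨hf, h₀⟩, ⟨_, h₁⟩⟩ => ?_⟩,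
    fun f _ => ⟨hlower f, hupper f⟩⟩
  · obtain ⟨p, hp⟩ := hJne
    have hf := (hmem p hp q hq).1
    exact ⟨⟨hf, (le_max_left _ _).trans_lt ((hlower f).trans_lt hsup)⟩,
      ⟨hf, (le_max_right _ _).trans_lt ((hlower f).trans_lt hsup)⟩⟩
  · have hfin := mul_lt_top hK.lt_top (max_lt h₀ h₁)
    refine ⟨fun p hp q hq => ⟨hf, lt_of_le_of_lt ?_ ((hupper f).trans_lt hfin)⟩,
      (hupper f).trans_lt hfin⟩
    exact le_iSup₂_of_le p hp (le_iSup₂_of_le q hq le_rfl)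

/-- `IL_{J,Q} = L_{m_J,m_Q} ∩ L_{M_J,m_Q}`, with
`max{‖f‖_{L_{m_J,m_Q}}, ‖f‖_{L_{M_J,m_Q}}} ≤ sup_{p∈J,q∈Q} ‖f‖_{L_{p,q}}
≤ K max{‖f‖_{L_{m_J,m_Q}}, ‖f‖_{L_{M_J,m_Q}}}` where
`K = 2^{1/m_Q} max{1, (m_Q/m_J)^{1/m_Q}}`. -/
theorem stmt13 (μ : Measure X) (J Q : Set ℝ≥0∞)
    (hJne : J.Nonempty) (hJ : J ⊆ Ioo 0 ∞) (hmJ : 0 < sInf J) (hMJ : sSup J ≠ ∞)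
    (hQne : Q.Nonempty) (hQ : Q ⊆ Ioo 0 ∞) (hmQ : 0 < sInf Q) :
    ILJQ μ J Q = Lorentz μ (sInf J) (sInf Q) ∩ Lorentz μ (sSup J) (sInf Q) ∧
    ∀ f ∈ ILJQ μ J Q,
      max (lorentzNorm μ f (sInf J) (sInf Q)) (lorentzNorm μ f (sSup J) (sInf Q)) ≤
        (⨆ p ∈ J, ⨆ q ∈ Q, lorentzNorm μ f p q) ∧
      (⨆ p ∈ J, ⨆ q ∈ Q, lorentzNorm μ f p q) ≤
        ((2 : ℝ≥0∞) ^ (1 / sInf Q).toReal *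
            max 1 ((sInf Q / sInf J) ^ (1 / sInf Q).toReal)) *
          max (lorentzNorm μ f (sInf J) (sInf Q)) (lorentzNorm μ f (sSup J) (sInf Q)) :=
  stmt13_general μ J Q hJne hmJ hMJ hQne hQ hmQ
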